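/- With ω = e^{2πi/3}, G = diag(1, ω², ω²), R = H·G·Hᴴ and H the qutrit Hadamard, one also has H = c′ · R·G·R for some nonzero complex scalar c′ (non-uniqueness of the Euler decomposition). -/

import Mathlib

noncomputable def ω : ℂ := Complex.exp (2 * Real.pi * Complex.I / 3)

noncomputable def H : Matrix (Fin 3) (Fin 3) ℂ :=
  Matrix.of fun j k => (1 / Real.sqrt 3 : ℂ) * ω ^ (j.val * k.val)

noncomputable def G : Matrix (Fin 3) (Fin 3) ℂ :=
  Matrix.diagonal ![1, ω ^ 2, ω ^ 2]

noncomputable def R : Matrix (Fin 3) (Fin 3) ℂ :=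
  H * G * H.conjTranspose

/-!
Write `G = ω² · 1 + (1 - ω²) · e₀e₀ᴴ`. Since `H` is unitary with first column `(1, 1, 1)/√3`,
`R = ω² · 1 + (1 - ω²)/3 · J` with `J` the all-ones matrix, so every entry of `R * G * R` is a
polynomial in `ω`. Reducing these with `ω² + ω + 1 = 0` gives `(ω - ω²) • (R * G * R) = (ω^{jk})`,
the unnormalised Fourier matrix `√3 • H`. Hence `c′ = (ω - ω²)/√3`, which is nonzero because
`(ω - ω²)² = -3` (indeed `c′ = i`).
-/

lemma IsPrimitiveRoot.sq_add_self_add_one {A : Type*} [CommRing A] [IsDomain A] {ζ : A}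
    (h : IsPrimitiveRoot ζ 3) : ζ ^ 2 + ζ + 1 = 0 := by
  have hsum := h.geom_sum_eq_zero (by norm_num)
  simp only [Finset.sum_range_succ, Finset.sum_range_zero] at hsum
  linear_combination hsum

lemma IsPrimitiveRoot.conj_eq_sq {ζ : ℂ} (h : IsPrimitiveRoot ζ 3) :
    starRingEnd ℂ ζ = ζ ^ 2 := by
  rw [← Complex.inv_eq_conj (Complex.norm_eq_one_of_pow_eq_one h.pow_eq_one (by norm_num))]
  exact (eq_inv_of_mul_eq_one_left (by rw [← pow_succ, h.pow_eq_one])).symm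

lemma isPrimitiveRoot_ω : IsPrimitiveRoot ω 3 := by
  simpa [ω] using Complex.isPrimitiveRoot_exp 3 (by norm_num)

lemma ω_sub_ω_sq_sq : (ω - ω ^ 2) ^ 2 = -3 := by
  linear_combination (ω - 2) * isPrimitiveRoot_ω.pow_eq_one
    + isPrimitiveRoot_ω.sq_add_self_add_one

lemma R_eq : R = Matrix.of fun i j => if i = j then (1 + 2 * ω ^ 2) / 3 else (1 - ω ^ 2) / 3 := by
  have hω3 := isPrimitiveRoot_ω.pow_eq_one
  have hω := isPrimitiveRoot_ω.sq_add_self_add_one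
  have hsqrt3 : ((Real.sqrt 3 : ℝ) : ℂ) ^ 2 = 3 := by
    rw [← Complex.ofReal_pow, Real.sq_sqrt (by norm_num)]; norm_num
  ext i j
  fin_cases i <;> fin_cases j <;>
    simp [R, H, G, Matrix.mul_apply, Fin.sum_univ_three, isPrimitiveRoot_ω.conj_eq_sq] <;> grind

lemma ω_sub_ω_sq_smul_R_mul_G_mul_R :
    (ω - ω ^ 2) • (R * G * R) = Matrix.of fun j k : Fin 3 => ω ^ (j.val * k.val) := by
  have hω3 := isPrimitiveRoot_ω.pow_eq_one
  have hω := isPrimitiveRoot_ω.sq_add_self_add_one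
  ext i j
  fin_cases i <;> fin_cases j <;>
    simp [R_eq, G, Matrix.mul_apply, Fin.sum_univ_three] <;> grind

theorem euler_decomposition_alt : ∃ c : ℂ, c ≠ 0 ∧ H = c • (R * G * R) := by
  have hsqrt3 : ((Real.sqrt 3 : ℝ) : ℂ) ≠ 0 := by exact_mod_cast (by positivity : Real.sqrt 3 ≠ 0)
  have hne : ω - ω ^ 2 ≠ 0 := fun h => by simpa [h] using ω_sub_ω_sq_sq
  refine ⟨(ω - ω ^ 2) / Real.sqrt 3, div_ne_zero hne hsqrt3, ?_⟩
  rw [div_eq_inv_mul, mul_smul, ω_sub_ω_sq_smul_R_mul_G_mul_R]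
  ext j k
  simp [H]
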